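/- Let H : [t₀, t₁] → M₂(ℂ) be continuous with values in Hermitian matrices such that ∫_{t₀}^{t₁} ‖H(τ)‖ dτ ≤ ε ≤ 1/4. Let X solve i X'(t) = H(t) X(t), X(t₀) = 𝕀, and set I = ∫_{t₀}^{t₁} H(τ) dτ. Then ‖X(t₁) − exp(-i I)‖ ≤ C ε² for a universal constant C. -/

import Mathlib

open Matrix MeasureTheory
open scoped Matrix.Norms.L2Operator

/-!
Since `H` is Hermitian, the solution `X` is unitary, so `‖X t - 1‖ ≤ ∫ ‖H‖ ≤ ε`. Writing
`A = -i ∫ H`, the integral equation gives `X t₁ - 1 - A = -i ∫ H (X - 1)`, of norm at most `ε²`,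
while the exponential series gives `‖exp A - 1 - A‖ ≤ ‖A‖² ≤ ε²`. Hence `C = 2` works.
-/

open Set intervalIntegral Complex

namespace NormedSpace

variable {𝔸 : Type*} [NormedRing 𝔸] [NormedAlgebra ℝ 𝔸] [CompleteSpace 𝔸]

theorem exp_sub_one_sub_eq_tsum (x : 𝔸) :
    exp x - 1 - x = ∑' n : ℕ, ((n + 2).factorial : ℝ)⁻¹ • x ^ (n + 2) := by
  rw [congrFun (exp_eq_tsum ℝ) x, ← (expSeries_summable' (𝕂 := ℝ) x).sum_add_tsum_nat_add 2]
  simp only [Finset.sum_range_succ, Finset.range_one, Finset.sum_singleton, Nat.factorial_zero,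
    Nat.factorial_one, Nat.cast_one, inv_one, pow_zero, pow_one, one_smul]
  abel

theorem norm_exp_sub_one_sub_le (x : 𝔸) : ‖exp x - 1 - x‖ ≤ Real.exp ‖x‖ - 1 - ‖x‖ := by
  have hsum : HasSum (fun n : ℕ => ((n + 2).factorial : ℝ)⁻¹ • ‖x‖ ^ (n + 2))
      (Real.exp ‖x‖ - 1 - ‖x‖) := by
    rw [Real.exp_eq_exp_ℝ, exp_sub_one_sub_eq_tsum]
    exact ((summable_nat_add_iff 2).mpr (expSeries_summable' (𝕂 := ℝ) ‖x‖)).hasSum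
  rw [exp_sub_one_sub_eq_tsum]
  refine tsum_of_norm_bounded hsum fun n => ?_
  rw [norm_smul, Real.norm_of_nonneg (by positivity), smul_eq_mul]
  gcongr
  exact norm_pow_le' x (by omega)

theorem norm_exp_sub_one_sub_id_le {x : 𝔸} (hx : ‖x‖ ≤ 1) : ‖exp x - 1 - x‖ ≤ ‖x‖ ^ 2 :=
  (norm_exp_sub_one_sub_le x).trans <|
    (le_abs_self _).trans (Real.abs_exp_sub_one_sub_id_le (by rwa [abs_norm]))

end NormedSpace

theorem CStarRing.norm_le_one_of_star_mul_self_eq_one {E : Type*} [NormedRing E] [StarRing E]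
    [CStarRing E] {x : E} (hx : star x * x = 1) : ‖x‖ ≤ 1 := by
  nontriviality E
  have h : ‖x‖ * ‖x‖ = 1 := by rw [← CStarRing.norm_star_mul_self, hx, norm_one]
  nlinarith [norm_nonneg x]

section Schrodinger

variable {𝔸 : Type*} {H X : ℝ → 𝔸} {a b : ℝ}

theorem star_mul_self_eq_one_of_hasDerivAt [NormedRing 𝔸] [StarRing 𝔸] [ContinuousStar 𝔸]
    [NormedAlgebra ℂ 𝔸] [StarModule ℂ 𝔸] (hH : ∀ t ∈ Icc a b, IsSelfAdjoint (H t))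
    (hX : ∀ t ∈ Icc a b, HasDerivAt X (-I • (H t * X t)) t) (h₀ : X a = 1) :
    ∀ t ∈ Icc a b, star (X t) * X t = 1 := by
  have hderiv : ∀ t ∈ Icc a b, HasDerivAt (fun s => star (X s) * X s) 0 t := by
    intro t ht
    refine ((hX t ht).star.mul (hX t ht)).congr_deriv ?_
    simp only [star_smul, star_mul, (hH t ht).star_eq, star_neg, Complex.star_def, conj_I,
      neg_neg, smul_mul_assoc, mul_neg, mul_smul_comm, mul_assoc, neg_smul, add_neg_cancel]
  have hcont : ContinuousOn (fun s => star (X s) * X s) (Icc a b) := fun t ht =>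
    (hderiv t ht).continuousAt.continuousWithinAt
  intro t ht
  rw [constant_of_has_deriv_right_zero hcont
    (fun s hs => (hderiv s (Ico_subset_Icc_self hs)).hasDerivWithinAt) t ht, h₀, star_one, one_mul]

theorem norm_neg_I_smul_mul_le [NormedRing 𝔸] [NormedAlgebra ℂ 𝔸] (h x : 𝔸) :
    ‖-I • (h * x)‖ ≤ ‖h‖ * ‖x‖ := by
  rw [norm_smul, norm_neg, norm_I, one_mul]
  exact norm_mul_le h x

variable [CStarAlgebra 𝔸]

theorem norm_sub_one_le_integral_norm (hHc : ContinuousOn H (Icc a b))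
    (hH : ∀ t ∈ Icc a b, IsSelfAdjoint (H t))
    (hX : ∀ t ∈ Icc a b, HasDerivAt X (-I • (H t * X t)) t) (h₀ : X a = 1) {t : ℝ}
    (ht : t ∈ Icc a b) : ‖X t - 1‖ ≤ ∫ s in a..t, ‖H s‖ := by
  have hsub : Icc a t ⊆ Icc a b := Icc_subset_Icc_right ht.2
  have hXc : ContinuousOn X (Icc a t) := fun s hs =>
    (hX s (hsub hs)).continuousAt.continuousWithinAt
  rw [← h₀, ← integral_eq_sub_of_hasDerivAt (fun s hs => hX s (hsub (uIcc_of_le ht.1 ▸ hs)))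
    ((((hHc.mono hsub).mul hXc).const_smul (-I)).intervalIntegrable_of_Icc ht.1)]
  refine norm_integral_le_of_norm_le ht.1 (ae_of_all _ fun s hs => ?_)
    ((hHc.mono hsub).norm.intervalIntegrable_of_Icc ht.1)
  have hs' : s ∈ Icc a b := hsub (Ioc_subset_Icc_self hs)
  calc ‖-I • (H s * X s)‖ ≤ ‖H s‖ * ‖X s‖ := norm_neg_I_smul_mul_le _ _
    _ ≤ ‖H s‖ := mul_le_of_le_one_right (norm_nonneg _) <|
        CStarRing.norm_le_one_of_star_mul_self_eq_one
          (star_mul_self_eq_one_of_hasDerivAt hH hX h₀ s hs')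

theorem norm_sub_exp_integral_le (hab : a ≤ b) (hHc : ContinuousOn H (Icc a b))
    (hH : ∀ t ∈ Icc a b, IsSelfAdjoint (H t))
    (hX : ∀ t ∈ Icc a b, HasDerivAt X (-I • (H t * X t)) t) (h₀ : X a = 1)
    (hsmall : ∫ t in a..b, ‖H t‖ ≤ 1) :
    ‖X b - NormedSpace.exp (-I • ∫ t in a..b, H t)‖ ≤ 2 * (∫ t in a..b, ‖H t‖) ^ 2 := by
  set ε := ∫ t in a..b, ‖H t‖
  set A := -I • ∫ t in a..b, H t
  have hXc : ContinuousOn X (Icc a b) := fun t ht => (hX t ht).continuousAt.continuousWithinAt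
  have hA : ‖A‖ ≤ ε := by
    rw [norm_smul, norm_neg, norm_I, one_mul]
    exact norm_integral_le_integral_norm hab
  have hduhamel : X b - 1 - A = ∫ t in a..b, -I • (H t * (X t - 1)) := by
    have hHX : IntervalIntegrable (fun t => -I • (H t * X t)) volume a b :=
      ((hHc.mul hXc).const_smul (-I)).intervalIntegrable_of_Icc hab
    have hH' : IntervalIntegrable (fun t => -I • H t) volume a b :=
      (hHc.const_smul (-I)).intervalIntegrable_of_Icc hab
    simp only [mul_sub, mul_one, smul_sub]
    rw [integral_sub hHX hH',
      integral_eq_sub_of_hasDerivAt (fun t ht => hX t (uIcc_of_le hab ▸ ht)) hHX,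
      intervalIntegral.integral_smul, h₀]
  have hquadratic : ‖X b - 1 - A‖ ≤ ε ^ 2 := by
    rw [hduhamel, sq, ← intervalIntegral.integral_mul_const]
    refine norm_integral_le_of_norm_le hab (ae_of_all _ fun t ht => ?_)
      ((hHc.norm.intervalIntegrable_of_Icc hab).mul_const ε)
    have ht' : t ∈ Icc a b := Ioc_subset_Icc_self ht
    refine (norm_neg_I_smul_mul_le _ _).trans (mul_le_mul_of_nonneg_left ?_ (norm_nonneg _))
    refine (norm_sub_one_le_integral_norm hHc hH hX h₀ ht').trans ?_
    exact integral_mono_interval le_rfl ht'.1 ht'.2 (ae_of_all _ fun _ => norm_nonneg _)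
      (hHc.norm.intervalIntegrable_of_Icc hab)
  calc ‖X b - NormedSpace.exp A‖ = ‖(X b - 1 - A) - (NormedSpace.exp A - 1 - A)‖ := by
        congr 1; abel
    _ ≤ ε ^ 2 + ‖A‖ ^ 2 :=
        (norm_sub_le _ _).trans (add_le_add hquadratic
          (NormedSpace.norm_exp_sub_one_sub_id_le (hA.trans hsmall)))
    _ ≤ 2 * ε ^ 2 := by nlinarith [norm_nonneg A]

end Schrodinger

/-- First-order Magnus expansion error bound: there is a universal constant `C` such that if
`∫ ‖H‖ ≤ ε ≤ 1/4`, `i X' = H(t) X`, `X(t₀) = 𝕀`, and `I = ∫_{t₀}^{t₁} H`, then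
`‖X(t₁) − exp(-i I)‖ ≤ C ε²`. -/
theorem magnus_first_order_error :
    ∃ C : ℝ, 0 < C ∧
      ∀ (t₀ t₁ : ℝ), t₀ < t₁ →
      ∀ (H : ℝ → Matrix (Fin 2) (Fin 2) ℂ), ContinuousOn H (Set.Icc t₀ t₁) →
      (∀ t ∈ Set.Icc t₀ t₁, (H t).IsHermitian) →
      ∀ ε : ℝ, (∫ τ in t₀..t₁, ‖H τ‖) ≤ ε → ε ≤ 1 / 4 →
      ∀ (X : ℝ → Matrix (Fin 2) (Fin 2) ℂ), X t₀ = 1 →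
      (∀ t ∈ Set.Icc t₀ t₁, HasDerivAt X (-Complex.I • (H t * X t)) t) →
      ‖X t₁ - NormedSpace.exp (-Complex.I • (∫ τ in t₀..t₁, H τ))‖ ≤ C * ε ^ 2 := by
  refine ⟨2, two_pos, fun t₀ t₁ hlt H hHc hH ε hε hε₄ X h₀ hX => ?_⟩
  have hnonneg : 0 ≤ ∫ τ in t₀..t₁, ‖H τ‖ := integral_nonneg hlt.le fun _ _ => norm_nonneg _
  calc _ ≤ 2 * (∫ τ in t₀..t₁, ‖H τ‖) ^ 2 :=
        norm_sub_exp_integral_le hlt.le hHc (fun t ht => (hH t ht).isSelfAdjoint) hX h₀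
          (by linarith)
    _ ≤ 2 * ε ^ 2 := by gcongr
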